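/- Let γⁿ_{{a_i²}} and γⁿ_{{b_i²}} be diagonal centered Gaussian measures on ℝⁿ with variances a_i² and b_i² respectively (a_i, b_i ≥ 0). Then the 2-Wasserstein distance satisfies W₂(γⁿ_{{a_i²}}, γⁿ_{{b_i²}})² = Σ_{i=1}^n (a_i − b_i)². -/

import Mathlib

open MeasureTheory ProbabilityTheory ENNReal

/-- The `p`-Wasserstein distance between two Borel probability measures. -/
noncomputable def wassersteinDist {X : Type*} [MetricSpace X] [MeasurableSpace X]
    (p : ℝ) (μ ν : Measure X) : ℝ≥0∞ :=
  ⨅ π ∈ {π : Measure (X × X) | IsProbabilityMeasure π ∧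
      π.map Prod.fst = μ ∧ π.map Prod.snd = ν},
    (∫⁻ z, edist z.1 z.2 ^ p ∂π) ^ (1 / p)

/-- The diagonal centered Gaussian measure on `ℝⁿ` (with the Euclidean metric)
with variances `aᵢ²`. -/
noncomputable def diagGaussian (n : ℕ) (a : Fin n → ℝ) :
    Measure (EuclideanSpace ℝ (Fin n)) :=
  (Measure.pi fun i => gaussianReal 0 (a i ^ 2).toNNReal).map
    (MeasurableEquiv.toLp 2 (Fin n → ℝ))

/-!
Write a coupling as a pair `(X, Y)`. Its cost `E‖X - Y‖²` splits into the coordinate terms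
`E|Xᵢ - Yᵢ|²`, and by the reverse triangle inequality in `L²` each of them is at least
`(‖Xᵢ‖₂ - ‖Yᵢ‖₂)² = (aᵢ - bᵢ)²`. Equality holds for `(X, Y) = (a x, b x)`, where `x` is a
standard Gaussian vector: then `Xᵢ - Yᵢ = (aᵢ - bᵢ) xᵢ`.
-/

open scoped NNReal

lemma lintegral_enorm_sq_gaussianReal (v : ℝ≥0) :
    ∫⁻ x, ‖x‖ₑ ^ 2 ∂gaussianReal 0 v = v := by
  have h := ofReal_variance (memLp_id_gaussianReal (μ := 0) (v := v) 2)
  rw [variance_id_gaussianReal, ENNReal.ofReal_coe_nnreal] at h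
  simp [h, evariance, integral_id_gaussianReal]

lemma gaussianReal_map_const_mul_standard (c : ℝ) :
    (gaussianReal 0 1).map (c * ·) = gaussianReal 0 (c ^ 2).toNNReal := by
  rw [gaussianReal_map_const_mul, mul_zero, mul_one, Real.toNNReal_of_nonneg (sq_nonneg c)]

section

variable {α : Type*} [MeasurableSpace α] {μ : Measure α}

lemma lintegral_enorm_sq_of_map_eq_gaussianReal {f : α → ℝ} (hf : Measurable f) {v : ℝ≥0}
    (h : μ.map f = gaussianReal 0 v) : ∫⁻ x, ‖f x‖ₑ ^ 2 ∂μ = v := by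
  rw [← lintegral_enorm_sq_gaussianReal v, ← h, lintegral_map (by fun_prop) hf]

lemma eLpNorm_two_sq_eq_lintegral {E : Type*} [NormedAddCommGroup E] (f : α → E) :
    eLpNorm f 2 μ ^ 2 = ∫⁻ x, ‖f x‖ₑ ^ 2 ∂μ := by
  simpa only [ENNReal.coe_ofNat, NNReal.coe_ofNat, ENNReal.rpow_two] using
    eLpNorm_nnreal_pow_eq_lintegral (f := f) (μ := μ) (p := 2) two_ne_zero

lemma eLpNorm_two_of_map_eq_gaussianReal {f : α → ℝ} (hf : Measurable f) {c : ℝ} (hc : 0 ≤ c)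
    (h : μ.map f = gaussianReal 0 (c ^ 2).toNNReal) : eLpNorm f 2 μ = ENNReal.ofReal c := by
  refine ENNReal.rpow_left_injective (two_ne_zero : (2 : ℝ) ≠ 0) ?_
  simp only [ENNReal.rpow_two]
  rw [eLpNorm_two_sq_eq_lintegral, lintegral_enorm_sq_of_map_eq_gaussianReal hf h,
    ← ENNReal.ofReal_pow hc]
  rfl

lemma eLpNorm_sub_eLpNorm_le_eLpNorm_sub {E : Type*} [NormedAddCommGroup E] {f g : α → E}
    {p : ℝ≥0∞}
    (hf : AEStronglyMeasurable f μ) (hg : AEStronglyMeasurable g μ) (hp : 1 ≤ p) :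
    eLpNorm f p μ - eLpNorm g p μ ≤ eLpNorm (f - g) p μ := by
  rw [tsub_le_iff_right]
  simpa using eLpNorm_add_le (hf.sub hg) hg hp

lemma ofReal_sub_sq_le_lintegral_of_map_eq_gaussianReal {f g : α → ℝ}
    (hf : Measurable f) (hg : Measurable g) {a b : ℝ} (ha : 0 ≤ a) (hb : 0 ≤ b)
    (hfμ : μ.map f = gaussianReal 0 (a ^ 2).toNNReal)
    (hgμ : μ.map g = gaussianReal 0 (b ^ 2).toNNReal) :
    ENNReal.ofReal ((a - b) ^ 2) ≤ ∫⁻ x, ‖f x - g x‖ₑ ^ 2 ∂μ := by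
  have hfa := eLpNorm_two_of_map_eq_gaussianReal hf ha hfμ
  have hgb := eLpNorm_two_of_map_eq_gaussianReal hg hb hgμ
  have key : ENNReal.ofReal |a - b| ≤ eLpNorm (f - g) 2 μ := by
    rcases le_total b a with hba | hab
    · rw [abs_of_nonneg (sub_nonneg.2 hba), ENNReal.ofReal_sub _ hb, ← hfa, ← hgb]
      exact eLpNorm_sub_eLpNorm_le_eLpNorm_sub hf.aestronglyMeasurable
        hg.aestronglyMeasurable one_le_two
    · rw [abs_of_nonpos (sub_nonpos.2 hab), neg_sub, ENNReal.ofReal_sub _ ha, ← hfa, ← hgb,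
        eLpNorm_sub_comm]
      exact eLpNorm_sub_eLpNorm_le_eLpNorm_sub hg.aestronglyMeasurable
        hf.aestronglyMeasurable one_le_two
  calc ENNReal.ofReal ((a - b) ^ 2) = ENNReal.ofReal |a - b| ^ 2 := by
        rw [← ENNReal.ofReal_pow (abs_nonneg _), sq_abs]
    _ ≤ eLpNorm (f - g) 2 μ ^ 2 := by gcongr
    _ = ∫⁻ x, ‖f x - g x‖ₑ ^ 2 ∂μ := eLpNorm_two_sq_eq_lintegral _

end

lemma EuclideanSpace.edist_rpow_two_eq_sum {ι : Type*} [Fintype ι] (x y : EuclideanSpace ℝ ι) :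
    edist x y ^ (2 : ℝ) = ∑ i, ‖x i - y i‖ₑ ^ 2 := by
  rw [EuclideanSpace.edist_eq, ← ENNReal.rpow_mul]
  norm_num [edist_eq_enorm_sub]

lemma lintegral_edist_rpow_two_eq_sum {ι : Type*} [Fintype ι]
    (P : Measure (EuclideanSpace ℝ ι × EuclideanSpace ℝ ι)) :
    ∫⁻ z, edist z.1 z.2 ^ (2 : ℝ) ∂P = ∑ i, ∫⁻ z, ‖z.1 i - z.2 i‖ₑ ^ 2 ∂P := by
  simp_rw [EuclideanSpace.edist_rpow_two_eq_sum]
  exact lintegral_finsetSum _ fun i _ => by fun_prop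

lemma pi_gaussianReal_map_const_mul {ι : Type*} [Fintype ι] (a : ι → ℝ) :
    (Measure.pi fun _ : ι => gaussianReal 0 1).map (a * ·)
      = Measure.pi fun i => gaussianReal 0 (a i ^ 2).toNNReal := by
  rw [show (a * ·) = fun x i => a i * x i from rfl, Measure.pi_map_pi (fun _ => by fun_prop)]
  simp_rw [gaussianReal_map_const_mul_standard]

lemma diagGaussian_map_apply (n : ℕ) (a : Fin n → ℝ) (i : Fin n) :
    (diagGaussian n a).map (fun x => x i) = gaussianReal 0 (a i ^ 2).toNNReal := by
  rw [diagGaussian, Measure.map_map (by fun_prop) (by fun_prop)]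
  exact (measurePreserving_eval _ i).map_eq

noncomputable def diagGaussianCoupling (n : ℕ) (a b : Fin n → ℝ) :
    Measure (EuclideanSpace ℝ (Fin n) × EuclideanSpace ℝ (Fin n)) :=
  (Measure.pi fun _ => gaussianReal 0 1).map fun x =>
    (MeasurableEquiv.toLp 2 (Fin n → ℝ) (a * x), MeasurableEquiv.toLp 2 (Fin n → ℝ) (b * x))

namespace diagGaussianCoupling

variable {n : ℕ} (a b : Fin n → ℝ)

instance : IsProbabilityMeasure (diagGaussianCoupling n a b) :=
  Measure.isProbabilityMeasure_map (by fun_prop)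

lemma map_fst : (diagGaussianCoupling n a b).map Prod.fst = diagGaussian n a := by
  rw [diagGaussianCoupling, Measure.map_map (by fun_prop) (by fun_prop), diagGaussian,
    ← pi_gaussianReal_map_const_mul, Measure.map_map (by fun_prop) (by fun_prop)]
  rfl

lemma map_snd : (diagGaussianCoupling n a b).map Prod.snd = diagGaussian n b := by
  rw [diagGaussianCoupling, Measure.map_map (by fun_prop) (by fun_prop), diagGaussian,
    ← pi_gaussianReal_map_const_mul, Measure.map_map (by fun_prop) (by fun_prop)]
  rfl

lemma map_sub_apply (i : Fin n) :
    (diagGaussianCoupling n a b).map (fun z => z.1 i - z.2 i)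
      = gaussianReal 0 ((a i - b i) ^ 2).toNNReal := by
  have hlaw : (diagGaussianCoupling n a b).map (fun z => z.1 i - z.2 i)
      = ((Measure.pi fun _ => gaussianReal 0 1).map (Function.eval i)).map ((a i - b i) * ·) := by
    rw [diagGaussianCoupling, Measure.map_map (by fun_prop) (by fun_prop),
      Measure.map_map (by fun_prop) (by fun_prop)]
    congr 1
    ext x
    simp [sub_mul]
  rw [hlaw, (measurePreserving_eval _ i).map_eq, gaussianReal_map_const_mul_standard]

end diagGaussianCoupling

lemma wassersteinDist_eq_of_optimal_coupling {X : Type*} [MetricSpace X] [MeasurableSpace X]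
    {p : ℝ} (hp : 0 ≤ p) {μ ν : Measure X} {C : ℝ≥0∞}
    (hle : ∀ π : Measure (X × X), IsProbabilityMeasure π → π.map Prod.fst = μ →
      π.map Prod.snd = ν → C ≤ ∫⁻ z, edist z.1 z.2 ^ p ∂π)
    (π₀ : Measure (X × X)) [IsProbabilityMeasure π₀] (hfst : π₀.map Prod.fst = μ)
    (hsnd : π₀.map Prod.snd = ν) (hcost : ∫⁻ z, edist z.1 z.2 ^ p ∂π₀ = C) :
    wassersteinDist p μ ν = C ^ (1 / p) := by
  refine le_antisymm (iInf₂_le_of_le π₀ ⟨inferInstance, hfst, hsnd⟩ (by rw [hcost])) ?_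
  refine le_iInf₂ fun π ⟨hπ, hπfst, hπsnd⟩ => ?_
  exact ENNReal.rpow_le_rpow (hle π hπ hπfst hπsnd) (by positivity)

lemma ofReal_sum_sub_sq_le_lintegral_edist {n : ℕ} {a b : Fin n → ℝ}
    (ha : ∀ i, 0 ≤ a i) (hb : ∀ i, 0 ≤ b i)
    (π : Measure (EuclideanSpace ℝ (Fin n) × EuclideanSpace ℝ (Fin n)))
    (hfst : π.map Prod.fst = diagGaussian n a) (hsnd : π.map Prod.snd = diagGaussian n b) :
    ENNReal.ofReal (∑ i, (a i - b i) ^ 2) ≤ ∫⁻ z, edist z.1 z.2 ^ (2 : ℝ) ∂π := by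
  rw [lintegral_edist_rpow_two_eq_sum, ENNReal.ofReal_sum_of_nonneg fun i _ => sq_nonneg _]
  gcongr with i
  refine ofReal_sub_sq_le_lintegral_of_map_eq_gaussianReal (by fun_prop) (by fun_prop)
    (ha i) (hb i) ?_ ?_
  · rw [← diagGaussian_map_apply, ← hfst, Measure.map_map (by fun_prop) (by fun_prop)]
    rfl
  · rw [← diagGaussian_map_apply, ← hsnd, Measure.map_map (by fun_prop) (by fun_prop)]
    rfl

lemma lintegral_edist_diagGaussianCoupling (n : ℕ) (a b : Fin n → ℝ) :
    ∫⁻ z, edist z.1 z.2 ^ (2 : ℝ) ∂diagGaussianCoupling n a b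
      = ENNReal.ofReal (∑ i, (a i - b i) ^ 2) := by
  rw [lintegral_edist_rpow_two_eq_sum, ENNReal.ofReal_sum_of_nonneg fun i _ => sq_nonneg _]
  refine Finset.sum_congr rfl fun i _ => ?_
  rw [lintegral_enorm_sq_of_map_eq_gaussianReal (by fun_prop)
    (diagGaussianCoupling.map_sub_apply a b i)]
  rfl

/-- Gelbrich's formula for diagonal centered Gaussians:
`W₂(γ_{a²}, γ_{b²})² = ∑ (aᵢ − bᵢ)²`. -/
theorem wasserstein_diagGaussian (n : ℕ) (a b : Fin n → ℝ)
    (ha : ∀ i, 0 ≤ a i) (hb : ∀ i, 0 ≤ b i) :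
    wassersteinDist 2 (diagGaussian n a) (diagGaussian n b) ^ (2 : ℕ)
      = ENNReal.ofReal (∑ i, (a i - b i) ^ 2) := by
  rw [wassersteinDist_eq_of_optimal_coupling zero_le_two
    (fun π _ => ofReal_sum_sub_sq_le_lintegral_edist ha hb π) (diagGaussianCoupling n a b)
    (diagGaussianCoupling.map_fst a b) (diagGaussianCoupling.map_snd a b)
    (lintegral_edist_diagGaussianCoupling n a b), ← ENNReal.rpow_natCast, ← ENNReal.rpow_mul]
  norm_num
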